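/- arXiv:2403.12295 — 6 statements merged into one kernel-verified Lean document; each statement's English description precedes it below -/
import Mathlib

section
/- Let U be a random variable with values in [0,1] that is super-uniform, i.e. P(U ≤ u) ≤ u for all u ∈ [0,1], and let g : [0,1] → (0,∞) be a nonincreasing function. Then for any c > 0, E[ 1{U ≤ c·g(U)} / g(U) ] ≤ c. -/
/-!
Let `s` be the supremum of the levels `u ∈ [0,1]` with `u ≤ c g(u)`. Because `g` is
nonincreasing, `s ≤ c g(u)` for every such level `u`, so on the event `U ≤ c g(U)` we have
`U ≤ s` and `1 / g(U) ≤ c / s`. Hence the expectation is at most `(c / s) P(U ≤ s) ≤ c` by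
super-uniformity; the case `s = 0` is harmless because `P(U ≤ 0) = 0`.
-/

open MeasureTheory

section SelfBoundedLevels

variable {g : ℝ → ℝ} {S : Set ℝ} {c : ℝ}

theorem AntitoneOn.le_mul_of_le_mul_self (hg : AntitoneOn g S) (hc : 0 ≤ c)
    {u v : ℝ} (hu : u ∈ S) (huc : u ≤ c * g u) (hv : v ∈ S) (hvc : v ≤ c * g v) :
    u ≤ c * g v := by
  rcases le_total u v with huv | hvu
  · exact huv.trans hvc
  · exact huc.trans (mul_le_mul_of_nonneg_left (hg hv hu hvu) hc)

theorem AntitoneOn.sSup_le_mul (hg : AntitoneOn g S) (hc : 0 ≤ c)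
    {v : ℝ} (hv : v ∈ S) (hvc : v ≤ c * g v) :
    sSup {u | u ∈ S ∧ u ≤ c * g u} ≤ c * g v :=
  csSup_le ⟨v, hv, hvc⟩ fun _ ⟨hu, huc⟩ => hg.le_mul_of_le_mul_self hc hu huc hv hvc

theorem AntitoneOn.one_div_le_div_sSup (hg : AntitoneOn g S) (hc : 0 ≤ c)
    {v : ℝ} (hv : v ∈ S) (hvc : v ≤ c * g v) (hgv : 0 < g v)
    (hs : 0 < sSup {u | u ∈ S ∧ u ≤ c * g u}) :
    1 / g v ≤ c / sSup {u | u ∈ S ∧ u ≤ c * g u} := by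
  rw [div_le_div_iff₀ hgv hs, one_mul]
  exact hg.sSup_le_mul hc hv hvc

theorem AntitoneOn.ite_one_div_le_ite_div_sSup (hg : AntitoneOn g S) (hc : 0 ≤ c)
    (hA : BddAbove {u | u ∈ S ∧ u ≤ c * g u}) {x : ℝ} (hx : x ∈ S) (hx0 : 0 < x) (hgx : 0 < g x) :
    (if x ≤ c * g x then 1 / g x else 0) ≤
      if x ≤ sSup {u | u ∈ S ∧ u ≤ c * g u} then c / sSup {u | u ∈ S ∧ u ≤ c * g u} else 0 := by
  by_cases hxc : x ≤ c * g x
  · have hxs : x ≤ sSup {u | u ∈ S ∧ u ≤ c * g u} := le_csSup hA ⟨hx, hxc⟩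
    rw [if_pos hxc, if_pos hxs]
    exact hg.one_div_le_div_sSup hc hx hxc hgx (hx0.trans_le hxs)
  · rw [if_neg hxc]
    split_ifs with hxs
    exacts [div_nonneg hc (hx0.le.trans hxs), le_rfl]

end SelfBoundedLevels

theorem integral_le_mul_measureReal_of_ae_le_indicator {Ω : Type*} [MeasurableSpace Ω]
    {μ : Measure Ω} [IsFiniteMeasure μ] {f : Ω → ℝ} {E : Set Ω} {K : ℝ}
    (hE : MeasurableSet E) (hf : 0 ≤ᵐ[μ] f) (hfK : f ≤ᵐ[μ] E.indicator fun _ => K) :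
    ∫ ω, f ω ∂μ ≤ K * μ.real E := by
  calc ∫ ω, f ω ∂μ ≤ ∫ ω, E.indicator (fun _ => K) ω ∂μ :=
        integral_mono_of_nonneg hf ((integrable_const K).indicator hE) hfK
    _ = K * μ.real E := by rw [integral_indicator_const K hE, smul_eq_mul, mul_comm]

theorem div_mul_le_of_nonneg {c s : ℝ} (hc : 0 ≤ c) : c / s * s ≤ c := by
  rcases eq_or_ne s 0 with rfl | hs
  · simpa using hc
  · rw [div_mul_cancel₀ c hs]

theorem stmt_0_general {Ω : Type*} [MeasurableSpace Ω] (μ : Measure Ω) [IsProbabilityMeasure μ]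
    (U : Ω → ℝ) (hUmeas : Measurable U) (hUrange : ∀ ω, U ω ∈ Set.Icc (0 : ℝ) 1)
    (hsup : ∀ u ∈ Set.Icc (0 : ℝ) 1, μ {ω | U ω ≤ u} ≤ ENNReal.ofReal u)
    (g : ℝ → ℝ) (hganti : AntitoneOn g (Set.Icc 0 1))
    (hgpos : ∀ u ∈ Set.Icc (0 : ℝ) 1, 0 < g u)
    (c : ℝ) (hc : 0 < c) :
    ∫ ω, (if U ω ≤ c * g (U ω) then 1 / g (U ω) else 0) ∂μ ≤ c := by
  set A := {u | u ∈ Set.Icc (0 : ℝ) 1 ∧ u ≤ c * g u}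
  set s := sSup A
  have hAbdd : BddAbove A := ⟨1, fun _ hu => hu.1.2⟩
  have h0A : (0 : ℝ) ∈ A :=
    ⟨Set.left_mem_Icc.2 zero_le_one, (mul_pos hc (hgpos 0 (Set.left_mem_Icc.2 zero_le_one))).le⟩
  have hs : s ∈ Set.Icc (0 : ℝ) 1 := ⟨le_csSup hAbdd h0A, csSup_le ⟨0, h0A⟩ fun _ hu => hu.1.2⟩
  have hUpos : ∀ᵐ ω ∂μ, 0 < U ω := by
    rw [ae_iff]
    simpa using hsup 0 (Set.left_mem_Icc.2 zero_le_one)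
  have hnonneg : ∀ ω, 0 ≤ if U ω ≤ c * g (U ω) then 1 / g (U ω) else 0 := fun ω => by
    split_ifs
    exacts [(one_div_pos.mpr (hgpos _ (hUrange ω))).le, le_rfl]
  have hbound : ∀ᵐ ω ∂μ, (if U ω ≤ c * g (U ω) then 1 / g (U ω) else 0)
      ≤ {ω | U ω ≤ s}.indicator (fun _ => c / s) ω := by
    filter_upwards [hUpos] with ω hω
    exact hganti.ite_one_div_le_ite_div_sSup hc.le hAbdd (hUrange ω) hω (hgpos _ (hUrange ω))
  calc ∫ ω, (if U ω ≤ c * g (U ω) then 1 / g (U ω) else 0) ∂μ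
      ≤ c / s * μ.real {ω | U ω ≤ s} :=
        integral_le_mul_measureReal_of_ae_le_indicator
          (measurableSet_le hUmeas measurable_const) (.of_forall hnonneg) hbound
    _ ≤ c / s * s := mul_le_mul_of_nonneg_left
        (ENNReal.toReal_le_of_le_ofReal hs.1 (hsup s hs)) (div_nonneg hc.le hs.1)
    _ ≤ c := div_mul_le_of_nonneg hc.le

/-- Lemma 3.2 (i) of Blanchard–Roquain: for a super-uniform random variable `U` with values
in `[0,1]` and a nonincreasing positive function `g` on `[0,1]`,
`E[ 1{U ≤ c·g(U)} / g(U) ] ≤ c` for any `c > 0`. -/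
theorem stmt_0 {Ω : Type*} [MeasurableSpace Ω] (μ : Measure Ω) [IsProbabilityMeasure μ]
    (U : Ω → ℝ) (hUmeas : Measurable U) (hUrange : ∀ ω, U ω ∈ Set.Icc (0 : ℝ) 1)
    (hsup : ∀ u ∈ Set.Icc (0 : ℝ) 1, μ {ω | U ω ≤ u} ≤ ENNReal.ofReal u)
    (g : ℝ → ℝ) (hgmeas : Measurable g) (hganti : AntitoneOn g (Set.Icc 0 1))
    (hgpos : ∀ u ∈ Set.Icc (0 : ℝ) 1, 0 < g u)
    (c : ℝ) (hc : 0 < c) :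
    ∫ ω, (if U ω ≤ c * g (U ω) then 1 / g (U ω) else 0) ∂μ ≤ c :=
  stmt_0_general μ U hUmeas hUrange hsup g hganti hgpos c hc
end

section
/- Let q_1, …, q_m ∈ [0,1] and let BH(q) = {i : q_i ≤ α·ℓ̂/m} where ℓ̂ = max{ℓ ∈ {0,…,m} : q_(ℓ) ≤ α·ℓ/m} (q_(1) ≤ … ≤ q_(m) are the order statistics, with the convention that ℓ̂ = 0 if the set is empty). Fix i ∈ {1,…,m} and let q^{0,i} denote the vector q with the i-th coordinate replaced by 0. Then i ∈ BH(q) if and only if BH(q) = BH(q^{0,i}). -/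
/-
Lowering a rejected p-value can only enlarge the counts `#{j : q_j ≤ αℓ/m}`, so `ℓ̂` cannot
decrease; and it cannot increase either, since at the new, larger threshold the old value `q_i`
was already counted. Hence `ℓ̂` and with it the rejection set are unchanged. Conversely, a zero
p-value is always rejected, so `BH(q) = BH(q^{0,i})` forces `i ∈ BH(q)`.
-/

noncomputable section

/-- `ℓ̂ = max{ℓ ∈ {0,…,m} : q_(ℓ) ≤ α·ℓ/m}`, expressed through the equivalent counting
characterization `q_(ℓ) ≤ α·ℓ/m ↔ #{i : q_i ≤ α·ℓ/m} ≥ ℓ`. -/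
def bhNum (m : ℕ) (α : ℝ) (q : Fin m → ℝ) : ℕ :=
  sSup {ℓ : ℕ | ℓ ≤ m ∧ ℓ ≤ (Finset.univ.filter fun i => q i ≤ α * (ℓ : ℝ) / (m : ℝ)).card}

/-- The Benjamini–Hochberg rejection set at level `α`: `BH(q) = {i : q_i ≤ α·ℓ̂/m}`. -/
def bhSet (m : ℕ) (α : ℝ) (q : Fin m → ℝ) : Finset (Fin m) :=
  Finset.univ.filter fun i => q i ≤ α * (bhNum m α q : ℝ) / (m : ℝ)

open Finset

section

variable {m : ℕ} {α : ℝ}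

theorem bhNum_mem (q : Fin m → ℝ) :
    bhNum m α q ≤ m ∧ bhNum m α q ≤ #{j | q j ≤ α * (bhNum m α q : ℝ) / m} :=
  Nat.sSup_mem (s := {ℓ : ℕ | ℓ ≤ m ∧ ℓ ≤ #{j | q j ≤ α * (ℓ : ℝ) / m}})
    ⟨0, Nat.zero_le m, Nat.zero_le _⟩ ⟨m, fun _ hℓ => hℓ.1⟩

theorem le_bhNum {q : Fin m → ℝ} {ℓ : ℕ} (hm : ℓ ≤ m) (hcard : ℓ ≤ #{j | q j ≤ α * (ℓ : ℝ) / m}) :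
    ℓ ≤ bhNum m α q :=
  le_csSup ⟨m, fun _ hℓ => hℓ.1⟩ ⟨hm, hcard⟩

theorem bhNum_antitone : Antitone (bhNum m α) := fun _ q hq =>
  le_bhNum (bhNum_mem q).1 <| (bhNum_mem q).2.trans <| card_le_card <|
    monotone_filter_right _ fun j _ hj => (hq j).trans hj

theorem mem_bhSet {q : Fin m → ℝ} {j : Fin m} :
    j ∈ bhSet m α q ↔ q j ≤ α * (bhNum m α q : ℝ) / m := by
  simp [bhSet]

theorem bhNum_update_of_mem {q : Fin m → ℝ} {i : Fin m} {c : ℝ} (hα : 0 ≤ α) (hc : c ≤ q i)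
    (hi : i ∈ bhSet m α q) : bhNum m α (Function.update q i c) = bhNum m α q := by
  set q' := Function.update q i c
  have hq' : q' ≤ q := update_le_iff.mpr ⟨hc, fun _ _ => le_rfl⟩
  have hle : bhNum m α q ≤ bhNum m α q' := bhNum_antitone hq'
  have hi' : q i ≤ α * (bhNum m α q' : ℝ) / m :=
    (mem_bhSet.mp hi).trans (by gcongr)
  refine le_antisymm ?_ hle
  refine le_bhNum (bhNum_mem q').1 <| (bhNum_mem q').2.trans <| card_le_card fun j hj => ?_
  simp only [mem_filter, mem_univ, true_and] at hj ⊢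
  by_cases hji : j = i
  · exact hji ▸ hi'
  · simpa [q', hji] using hj

theorem bhSet_update_of_mem {q : Fin m → ℝ} {i : Fin m} {c : ℝ} (hα : 0 ≤ α) (hc : c ≤ q i)
    (hi : i ∈ bhSet m α q) : bhSet m α (Function.update q i c) = bhSet m α q := by
  ext j
  rw [mem_bhSet, mem_bhSet, bhNum_update_of_mem hα hc hi]
  by_cases hji : j = i
  · subst hji
    simpa using ⟨fun _ => mem_bhSet.mp hi, fun _ => hc.trans (mem_bhSet.mp hi)⟩
  · simp [hji]

theorem mem_bhSet_of_nonpos {q : Fin m → ℝ} {j : Fin m} (hα : 0 ≤ α) (hj : q j ≤ 0) :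
    j ∈ bhSet m α q :=
  mem_bhSet.mpr (hj.trans (by positivity))

end

theorem stmt_3_general (m : ℕ) (α : ℝ) (hα : α ∈ Set.Ioo (0 : ℝ) 1)
    (q : Fin m → ℝ) (hq : ∀ i, q i ∈ Set.Icc (0 : ℝ) 1) (i : Fin m) :
    i ∈ bhSet m α q ↔ bhSet m α q = bhSet m α (Function.update q i 0) := by
  refine ⟨fun hi => (bhSet_update_of_mem hα.1.le (hq i).1 hi).symm, fun heq => ?_⟩
  rw [heq]
  exact mem_bhSet_of_nonpos hα.1.le (by simp)

/-- Leave-one-out property of BH: `i ∈ BH(q)` iff `BH(q) = BH(q^{0,i})`, where `q^{0,i}`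
is `q` with the `i`-th coordinate replaced by `0`. -/
theorem stmt_3 (m : ℕ) (hm : 0 < m) (α : ℝ) (hα : α ∈ Set.Ioo (0 : ℝ) 1)
    (q : Fin m → ℝ) (hq : ∀ i, q i ∈ Set.Icc (0 : ℝ) 1) (i : Fin m) :
    i ∈ bhSet m α q ↔ bhSet m α q = bhSet m α (Function.update q i 0) :=
  stmt_3_general m α hα q hq i

end
end

section
/- Let m ≥ 1 and suppose that for each i ∈ {1,…,m} there are real-valued 'p-values' U_i ∈ [0,1] and random variables V_i ≥ 1 such that: (a) P(U_i ≤ t | W_i) ≤ t for all t ∈ [0,1] for some σ-field generated random element W_i; and (b) V_i = g_i(U_i) where g_i is a nonincreasing function measurable with respect to W_i. Then E[ Σ_{i=1}^m 1{U_i ≤ α·V_i/m} / V_i ] ≤ α for any α ∈ (0,1). -/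
/-!
Fix an index and put `c = α / m`. Since `G ω` is antitone, the set of `t ∈ [0, 1]` with
`t ≤ c * G ω t` is an initial segment; let `τ ω` be its supremum. It is `𝔉`-measurable because
each `G · t` is, and on the selection event `U ≤ c * V` we have `U ≤ τ ≤ c * V`, so the
summand is at most `c * 1{U ≤ τ} / τ`. Super-uniformity given `𝔉` extends from constant
thresholds to the `𝔉`-measurable threshold `τ`: slicing `τ` into the layers
`(δ ^ (k + 1), δ ^ k]` gives `E[1{U ≤ τ} / τ] ≤ 1 / δ` for every `δ < 1`, hence `≤ 1`.
Each of the `m` summands thus has expectation at most `α / m`.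
-/

open MeasureTheory Set Filter Topology Function

-- The supremum runs over rationals so that it stays measurable in a parameter of `f`.
noncomputable def crossingPoint (f : ℝ → ℝ) : ℝ :=
  ⨆ q : ℚ, if (q : ℝ) ∈ Icc 0 1 ∧ (q : ℝ) ≤ f q then (q : ℝ) else 0

section crossingPoint

variable {f : ℝ → ℝ}

lemma bddAbove_range_crossingPoint (f : ℝ → ℝ) :
    BddAbove (range fun q : ℚ => if (q : ℝ) ∈ Icc 0 1 ∧ (q : ℝ) ≤ f q then (q : ℝ) else 0) := by
  refine ⟨1, ?_⟩
  rintro _ ⟨q, rfl⟩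
  dsimp only
  split_ifs with hq
  exacts [hq.1.2, zero_le_one]

lemma crossingPoint_le_one (f : ℝ → ℝ) : crossingPoint f ≤ 1 := by
  refine ciSup_le fun q => ?_
  split_ifs with hq
  exacts [hq.1.2, zero_le_one]

lemma le_crossingPoint (hf : Antitone f) {u : ℝ} (hu : u ∈ Icc 0 1) (huf : u ≤ f u) :
    u ≤ crossingPoint f := by
  refine le_of_forall_lt fun x hxu => ?_
  rcases lt_or_ge x 0 with hx | hx
  · exact hx.trans_le (le_ciSup_of_le (bddAbove_range_crossingPoint f) 0 (by simp))
  obtain ⟨q, hxq, hqu⟩ := exists_rat_btwn hxu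
  have hq : (q : ℝ) ∈ Icc 0 1 ∧ (q : ℝ) ≤ f q :=
    ⟨⟨hx.trans hxq.le, hqu.le.trans hu.2⟩, hqu.le.trans (huf.trans (hf hqu.le))⟩
  exact hxq.trans_le (le_ciSup_of_le (bddAbove_range_crossingPoint f) q (by rw [if_pos hq]))

lemma crossingPoint_le (hf : Antitone f) {u : ℝ} (hu : 0 ≤ u) (huf : u ≤ f u) :
    crossingPoint f ≤ f u := by
  refine ciSup_le fun q => ?_
  split_ifs with hq
  · rcases le_total (q : ℝ) u with hqu | huq
    · exact hqu.trans huf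
    · exact hq.2.trans (hf huq)
  · exact hu.trans huf

lemma measurable_crossingPoint {Ω : Type*} {𝔉 : MeasurableSpace Ω} {F : Ω → ℝ → ℝ}
    (hF : ∀ t, Measurable[𝔉] fun ω => F ω t) : Measurable[𝔉] fun ω => crossingPoint (F ω) :=
  Measurable.iSup fun q => Measurable.ite
    ((MeasurableSet.const _).inter (measurableSet_le measurable_const (hF q)))
    measurable_const measurable_const

end crossingPoint

-- `P(U ≤ t | 𝔉) ≤ t` for `t ∈ [0, 1]`, stated without conditional probabilities.
def CondSuperUniform {Ω : Type*} [MeasurableSpace Ω] (μ : Measure Ω) (𝔉 : MeasurableSpace Ω)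
    (U : Ω → ℝ) : Prop :=
  ∀ t ∈ Icc (0 : ℝ) 1, ∀ A : Set Ω, MeasurableSet[𝔉] A →
    μ ({ω | U ω ≤ t} ∩ A) ≤ ENNReal.ofReal t * μ A

namespace CondSuperUniform

variable {Ω : Type*} {𝔉 : MeasurableSpace Ω} [mΩ : MeasurableSpace Ω] {μ : Measure Ω}
  {U τ : Ω → ℝ}

lemma measure_le_zero_inter_eq_zero (hU : CondSuperUniform μ 𝔉 U) {A : Set Ω}
    (hA : MeasurableSet[𝔉] A) :
    μ ({ω | U ω ≤ 0} ∩ A) = 0 := by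
  simpa using hU 0 ⟨le_rfl, zero_le_one⟩ A hA

lemma setLIntegral_inv_le_inv [IsProbabilityMeasure μ] (hU : CondSuperUniform μ 𝔉 U)
    (h𝔉 : 𝔉 ≤ mΩ) (hτ : Measurable[𝔉] τ) (hτ1 : ∀ ω, τ ω ≤ 1) {δ : ℝ} (hδ0 : 0 < δ)
    (hδ1 : δ < 1) :
    ∫⁻ ω in {ω | U ω ≤ τ ω}, (ENNReal.ofReal (τ ω))⁻¹ ∂μ ≤ (ENNReal.ofReal δ)⁻¹ := by
  set B : ℕ → Set Ω := fun k => τ ⁻¹' Ioc (δ ^ (k + 1)) (δ ^ k)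
  have hB : ∀ k, MeasurableSet[𝔉] (B k) := fun k => hτ measurableSet_Ioc
  have hBdisj : Pairwise (Disjoint on B) := fun k l hkl =>
    ((pow_right_anti₀ hδ0.le hδ1.le).pairwise_disjoint_on_Ioc_succ hkl).preimage τ
  have hcover : {ω | U ω ≤ τ ω} ⊆ ({ω | U ω ≤ 0} ∩ {ω | τ ω ≤ 0}) ∪
      ⋃ k, {ω | U ω ≤ δ ^ k} ∩ B k := by
    intro ω hω
    rcases le_or_gt (τ ω) 0 with hτ0 | hτ0
    · exact Or.inl ⟨hω.out.trans hτ0, hτ0⟩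
    · obtain ⟨k, hk⟩ := exists_nat_pow_near_of_lt_one hτ0 (hτ1 ω) hδ0 hδ1
      exact Or.inr (mem_iUnion.2 ⟨k, hω.out.trans hk.2, hk⟩)
  have hslice : ∀ k, ∫⁻ ω in {ω | U ω ≤ δ ^ k} ∩ B k, (ENNReal.ofReal (τ ω))⁻¹ ∂μ ≤
      (ENNReal.ofReal δ)⁻¹ * μ (B k) := by
    intro k
    calc ∫⁻ ω in {ω | U ω ≤ δ ^ k} ∩ B k, (ENNReal.ofReal (τ ω))⁻¹ ∂μ
        ≤ ∫⁻ _ in {ω | U ω ≤ δ ^ k} ∩ B k, (ENNReal.ofReal (δ ^ (k + 1)))⁻¹ ∂μ :=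
          setLIntegral_mono measurable_const fun ω hω =>
            ENNReal.inv_le_inv.2 (ENNReal.ofReal_le_ofReal hω.2.1.le)
      _ ≤ (ENNReal.ofReal (δ ^ (k + 1)))⁻¹ * (ENNReal.ofReal (δ ^ k) * μ (B k)) := by
          rw [setLIntegral_const]
          gcongr
          exact hU _ ⟨by positivity, pow_le_one₀ hδ0.le hδ1.le⟩ _ (hB k)
      _ = (ENNReal.ofReal δ)⁻¹ * μ (B k) := by
          rw [ENNReal.ofReal_pow hδ0.le, ENNReal.ofReal_pow hδ0.le, pow_succ',
            ENNReal.mul_inv (by simp [hδ0]) (by simp), mul_assoc,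
            ENNReal.inv_mul_cancel_left (by simp [hδ0]) (by simp)]
  calc ∫⁻ ω in {ω | U ω ≤ τ ω}, (ENNReal.ofReal (τ ω))⁻¹ ∂μ
      ≤ ∫⁻ ω in {ω | U ω ≤ 0} ∩ {ω | τ ω ≤ 0}, (ENNReal.ofReal (τ ω))⁻¹ ∂μ +
          ∫⁻ ω in ⋃ k, {ω | U ω ≤ δ ^ k} ∩ B k, (ENNReal.ofReal (τ ω))⁻¹ ∂μ :=
        (lintegral_mono_set hcover).trans (lintegral_union_le _ _ _)
    _ ≤ 0 + ∑' k, (ENNReal.ofReal δ)⁻¹ * μ (B k) := by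
        have hnull : μ ({ω | U ω ≤ 0} ∩ {ω | τ ω ≤ 0}) = 0 :=
          hU.measure_le_zero_inter_eq_zero (hτ measurableSet_Iic)
        rw [setLIntegral_measure_zero _ _ hnull]
        gcongr
        exact (lintegral_iUnion_le _ _).trans (ENNReal.tsum_le_tsum hslice)
    _ ≤ (ENNReal.ofReal δ)⁻¹ := by
        rw [zero_add, ENNReal.tsum_mul_left, ← measure_iUnion hBdisj fun k => h𝔉 _ (hB k)]
        exact mul_le_of_le_one_right' prob_le_one

lemma setLIntegral_inv_le_one [IsProbabilityMeasure μ] (hU : CondSuperUniform μ 𝔉 U)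
    (h𝔉 : 𝔉 ≤ mΩ) (hτ : Measurable[𝔉] τ) (hτ1 : ∀ ω, τ ω ≤ 1) :
    ∫⁻ ω in {ω | U ω ≤ τ ω}, (ENNReal.ofReal (τ ω))⁻¹ ∂μ ≤ 1 := by
  have hlim : Tendsto (fun δ : ℝ => (ENNReal.ofReal δ)⁻¹) (𝓝[<] 1) (𝓝 1) := by
    simpa using ((ENNReal.continuous_ofReal.tendsto 1).inv).mono_left nhdsWithin_le_nhds
  refine ge_of_tendsto hlim ?_
  filter_upwards [Ioo_mem_nhdsLT zero_lt_one] with δ hδ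
  exact hU.setLIntegral_inv_le_inv h𝔉 hτ hτ1 hδ.1 hδ.2

end CondSuperUniform

section Selection

variable {Ω : Type*} {𝔉 : MeasurableSpace Ω} [mΩ : MeasurableSpace Ω] {μ : Measure Ω}
  {U V : Ω → ℝ}

lemma measurable_ite_one_div (hU : Measurable U) (hV : Measurable V) (c : ℝ) :
    Measurable fun ω => if U ω ≤ c * V ω then 1 / V ω else 0 :=
  Measurable.ite (measurableSet_le hU (hV.const_mul c)) (hV.const_div 1) measurable_const

lemma integrable_ite_one_div [IsFiniteMeasure μ] (hU : Measurable U) (hV : Measurable V)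
    (hV1 : ∀ ω, 1 ≤ V ω) (c : ℝ) :
    Integrable (fun ω => if U ω ≤ c * V ω then 1 / V ω else 0) μ := by
  refine Integrable.of_bound (measurable_ite_one_div hU hV c).aestronglyMeasurable 1
    (ae_of_all _ fun ω => ?_)
  split_ifs
  · rw [norm_div, norm_one, Real.norm_of_nonneg (zero_le_one.trans (hV1 ω))]
    exact div_le_one_of_le₀ (hV1 ω) (zero_le_one.trans (hV1 ω))
  · simp

theorem integral_ite_one_div_le [IsProbabilityMeasure μ] {c : ℝ} (hc : 0 < c)
    {g : Ω → ℝ → ℝ} (hUs : CondSuperUniform μ 𝔉 U) (h𝔉 : 𝔉 ≤ mΩ) (hU : Measurable U)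
    (hV : Measurable V) (hU01 : ∀ ω, U ω ∈ Icc 0 1) (hV0 : ∀ ω, 0 < V ω)
    (hg : ∀ ω, Antitone (g ω)) (hgm : ∀ t, Measurable[𝔉] fun ω => g ω t)
    (hVg : ∀ ω, V ω = g ω (U ω)) :
    ∫ ω, (if U ω ≤ c * V ω then 1 / V ω else 0) ∂μ ≤ c := by
  set τ : Ω → ℝ := fun ω => crossingPoint fun t => c * g ω t
  have hτ : Measurable[𝔉] τ := measurable_crossingPoint fun t => (hgm t).const_mul c
  have hpt : ∀ ω, ENNReal.ofReal (if U ω ≤ c * V ω then 1 / V ω else 0) ≤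
      ENNReal.ofReal c * {ω | U ω ≤ τ ω}.indicator (fun ω => (ENNReal.ofReal (τ ω))⁻¹) ω := by
    intro ω
    split_ifs with hsel
    · have hanti : Antitone fun t => c * g ω t := fun a b hab =>
        mul_le_mul_of_nonneg_left (hg ω hab) hc.le
      rw [hVg] at hsel
      have hUτ : U ω ≤ τ ω := le_crossingPoint hanti (hU01 ω) hsel
      have hτV : τ ω ≤ c * V ω := hVg ω ▸ crossingPoint_le hanti (hU01 ω).1 hsel
      rw [indicator_of_mem (show ω ∈ {ω | U ω ≤ τ ω} from hUτ), ← div_eq_mul_inv,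
        ENNReal.le_div_iff_mul_le (Or.inr (by simpa using hc)) (Or.inl ENNReal.ofReal_ne_top),
        ← ENNReal.ofReal_mul (one_div_nonneg.2 (hV0 ω).le), one_div_mul_eq_div]
      exact ENNReal.ofReal_le_ofReal ((div_le_iff₀ (hV0 ω)).2 hτV)
    · simp
  have hnonneg : ∀ ω, 0 ≤ if U ω ≤ c * V ω then 1 / V ω else 0 := fun ω => by
    split_ifs <;> simp [(hV0 ω).le]
  rw [integral_eq_lintegral_of_nonneg_ae (ae_of_all _ hnonneg)
    (measurable_ite_one_div hU hV c).aestronglyMeasurable]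
  refine ENNReal.toReal_le_of_le_ofReal hc.le ?_
  calc ∫⁻ ω, ENNReal.ofReal (if U ω ≤ c * V ω then 1 / V ω else 0) ∂μ
      ≤ ∫⁻ ω, ENNReal.ofReal c *
          {ω | U ω ≤ τ ω}.indicator (fun ω => (ENNReal.ofReal (τ ω))⁻¹) ω ∂μ :=
        lintegral_mono hpt
    _ = ENNReal.ofReal c * ∫⁻ ω in {ω | U ω ≤ τ ω}, (ENNReal.ofReal (τ ω))⁻¹ ∂μ := by
        rw [lintegral_const_mul' _ _ ENNReal.ofReal_ne_top,
          lintegral_indicator (measurableSet_le hU (hτ.mono h𝔉 le_rfl))]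
    _ ≤ ENNReal.ofReal c := by
        refine mul_le_of_le_one_right' ?_
        exact hUs.setLIntegral_inv_le_one h𝔉 hτ fun ω => crossingPoint_le_one _

end Selection


/-- Core FCR inequality: for `m` indices with conditionally super-uniform p-values `U_i`
(given sub-σ-fields `𝔉 i` generated by `W_i`) and selection sizes `V_i ≥ 1` that are
nonincreasing functions of `U_i` measurable with respect to `𝔉 i`, one has
`E[ Σ_i 1{U_i ≤ α·V_i/m}/V_i ] ≤ α` for any `α ∈ (0,1)`. -/
theorem stmt_10 {Ω : Type*} [mΩ : MeasurableSpace Ω] (μ : Measure Ω) [IsProbabilityMeasure μ]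
    (m : ℕ) (hm : 1 ≤ m) (α : ℝ) (hα : α ∈ Set.Ioo (0 : ℝ) 1)
    (U V : Fin m → Ω → ℝ)
    (hUmeas : ∀ i, Measurable (U i)) (hVmeas : ∀ i, Measurable (V i))
    (hU01 : ∀ i ω, U i ω ∈ Set.Icc (0 : ℝ) 1) (hV1 : ∀ i ω, 1 ≤ V i ω)
    (𝔉 : Fin m → MeasurableSpace Ω) (h𝔉 : ∀ i, 𝔉 i ≤ mΩ)
    (hsup : ∀ i, ∀ t ∈ Set.Icc (0 : ℝ) 1, ∀ A : Set Ω, MeasurableSet[𝔉 i] A →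
      μ ({ω | U i ω ≤ t} ∩ A) ≤ ENNReal.ofReal t * μ A)
    (G : Fin m → Ω → ℝ → ℝ)
    (hGanti : ∀ i ω, Antitone (G i ω))
    (hGmeas : ∀ i (u : ℝ), Measurable[𝔉 i] fun ω => G i ω u)
    (hVG : ∀ i ω, V i ω = G i ω (U i ω)) :
    ∫ ω, (∑ i : Fin m, if U i ω ≤ α * V i ω / m then 1 / V i ω else 0) ∂μ ≤ α := by
  have hm0 : (0 : ℝ) < m := Nat.cast_pos.2 hm
  simp_rw [mul_div_right_comm α]
  rw [integral_finsetSum _ fun i _ => integrable_ite_one_div (hUmeas i) (hVmeas i) (hV1 i) _]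
  calc ∑ i, ∫ ω, (if U i ω ≤ α / m * V i ω then 1 / V i ω else 0) ∂μ
      ≤ ∑ _i : Fin m, α / m := Finset.sum_le_sum fun i _ =>
        integral_ite_one_div_le (div_pos hα.1 hm0) (hsup i) (h𝔉 i) (hUmeas i) (hVmeas i)
          (hU01 i) (fun ω => one_pos.trans_le (hV1 i ω)) (hGanti i) (hGmeas i) (hVG i)
    _ = α := by
        rw [Finset.sum_const, Finset.card_univ, Fintype.card_fin, nsmul_eq_mul]
        field_simp
end

section
/- In the setting of full-calibrated conformal p-values, the leave-one-out p-value vector p̄_{−i} = (p̄_j^(y))_{j≠i, y∈Y} can be written as Ψ(p̄_i^{(Y_{n+i})}, W_i), where W_i = (A_i, (S_y(X_{n+j}))_{j≠i, y∈Y}), A_i = {S_{Y_j}(X_j) : j∈[n]} ∪ {S_{Y_{n+i}}(X_{n+i})} = {a_{i,(1)} > … > a_{i,(n+1)}}, and Ψ(u, W_i) has (j,y)-coordinate (1/(n+1))·(1{a_{i,(⌈u(n+1)⌉)} < S_y(X_{n+j})} + Σ_{s∈A_i} 1{s ≥ S_y(X_{n+j})}). Moreover u ↦ Ψ(u, W_i)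 is coordinate-wise nondecreasing. -/
/-!
The pooled set `A = {c k} ∪ {s*}` has `n + 1` distinct elements, and `s*` is its `(K + 1)`-th
largest, where `K` counts the calibration scores above `s*`. Since `(n + 1) p̄ = K + 1` exactly,
`Ψ(p̄, W)` compares the test score with `s*` itself, and this indicator together with the count
over `A` is the count over the calibration scores plus one. Monotonicity holds because
`ℓ ↦ a_(ℓ)` is nonincreasing and `u ↦ ⌈u (n + 1)⌉` is nondecreasing with values in `[1, n + 1]`
on `(0, 1]`.
-/

noncomputable section

/-- The `ℓ`-th largest element of the finite set `A` (`a_{(1)} > a_{(2)} > …`). -/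
def aDesc (A : Finset ℝ) (ℓ : ℕ) : ℝ :=
  ((A.sort (· ≤ ·)).reverse).getD (ℓ - 1) 0

/-- The map `Ψ(u, W_i)` in its `(j,y)`-coordinate: with `A = A_i` and
`tsc = S_y(X_{n+j})`, it equals
`(1/(n+1))·(1{a_{(⌈u(n+1)⌉)} < S_y(X_{n+j})} + Σ_{s∈A} 1{s ≥ S_y(X_{n+j})})`. -/
def psiMap (n : ℕ) (A : Finset ℝ) (tsc : ℝ) (u : ℝ) : ℝ :=
  ((if aDesc A ⌈u * (n + 1)⌉₊ < tsc then (1 : ℝ) else 0)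
    + ((A.filter fun s => tsc ≤ s).card : ℝ)) / (n + 1)

open Finset

lemma aDesc_eq_orderEmbOfFin (A : Finset ℝ) {ℓ : ℕ} (h₁ : 1 ≤ ℓ) (h₂ : ℓ ≤ #A) :
    aDesc A ℓ = A.orderEmbOfFin rfl ⟨#A - ℓ, by omega⟩ := by
  have hlen : (A.sort (· ≤ ·)).length = #A := length_sort _
  rw [aDesc, List.getD_eq_getElem _ _ (by simp [hlen]; omega), List.getElem_reverse,
    orderEmbOfFin_apply]
  congr 1
  simp [hlen]; omega

lemma aDesc_antitoneOn (A : Finset ℝ) : AntitoneOn (aDesc A) (Set.Icc 1 #A) := by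
  rintro k ⟨hk₁, hk₂⟩ l ⟨hl₁, hl₂⟩ hkl
  rw [aDesc_eq_orderEmbOfFin A hk₁ hk₂, aDesc_eq_orderEmbOfFin A hl₁ hl₂]
  exact (A.orderEmbOfFin rfl).monotone (Fin.mk_le_mk.2 (by omega))

lemma aDesc_card_filter_lt_add_one (A : Finset ℝ) {a : ℝ} (ha : a ∈ A) :
    aDesc A (#{b ∈ A | a < b} + 1) = a := by
  set e := A.orderEmbOfFin rfl
  have mem_range_e : ∀ b ∈ A, b ∈ Set.range e := fun b hb => by
    rwa [range_orderEmbOfFin]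
  obtain ⟨j, rfl⟩ := mem_range_e a ha
  have hfilter : {b ∈ A | e j < b} = (Ioi j).map e.toEmbedding := by
    ext b
    simp only [mem_filter, mem_map, mem_Ioi, RelEmbedding.coe_toEmbedding]
    constructor
    · rintro ⟨hb, hjb⟩
      obtain ⟨p, rfl⟩ := mem_range_e b hb
      exact ⟨p, e.lt_iff_lt.1 hjb, rfl⟩
    · rintro ⟨p, hp, rfl⟩
      exact ⟨orderEmbOfFin_mem A rfl p, e.lt_iff_lt.2 hp⟩
  have hcard : #{b ∈ A | e j < b} = #A - 1 - j := by
    rw [hfilter, card_map, Fin.card_Ioi]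
  rw [hcard, aDesc_eq_orderEmbOfFin A (by omega) (by omega)]
  congr 1
  ext; simp; omega

lemma card_filter_image_union_singleton {ι α : Type*} [Fintype ι] [DecidableEq α] {c : ι → α}
    (hc : Function.Injective c) {x : α} (hx : x ∉ Set.range c) (P : α → Prop) [DecidablePred P] :
    #{s ∈ univ.image c ∪ {x} | P s} = #{k | P (c k)} + if P x then 1 else 0 := by
  rw [union_singleton, filter_insert, filter_image]
  split_ifs with hPx
  · rw [card_insert_of_notMem fun h => hx (by aesop), card_image_of_injective _ hc]
  · rw [card_image_of_injective _ hc, add_zero]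

lemma psiMap_of_rank (n : ℕ) (A : Finset ℝ) {a : ℝ} (ha : a ∈ A) (t : ℝ) :
    psiMap n A t ((#{b ∈ A | a < b} + 1 : ℕ) / (n + 1)) =
      ((if a < t then 1 else 0) + #{s ∈ A | t ≤ s}) / (n + 1) := by
  rw [psiMap, div_mul_cancel₀ _ (by positivity), Nat.ceil_natCast,
    aDesc_card_filter_lt_add_one A ha]

lemma psiMap_monotoneOn (n : ℕ) {A : Finset ℝ} (hA : #A = n + 1) (t : ℝ) :
    MonotoneOn (psiMap n A t) (Set.Ioc 0 1) := by
  intro u hu v hv huv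
  have hpos : (0 : ℝ) < n + 1 := by positivity
  have mem_Icc : ∀ w ∈ Set.Ioc (0 : ℝ) 1, ⌈w * (n + 1)⌉₊ ∈ Set.Icc 1 #A := fun w hw =>
    ⟨Nat.one_le_iff_ne_zero.2 (Nat.ceil_pos.2 (mul_pos hw.1 hpos)).ne',
      Nat.ceil_le.2 (by push_cast [hA]; nlinarith [hw.2])⟩
  unfold psiMap
  gcongr (?_ + _) / _
  have hdesc := aDesc_antitoneOn A (mem_Icc u hu) (mem_Icc v hv)
    (Nat.ceil_le_ceil (mul_le_mul_of_nonneg_right huv hpos.le))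
  split_ifs with hu' hv'
  · exact le_rfl
  · exact absurd (hdesc.trans_lt hu') hv'
  · exact zero_le_one
  · exact le_rfl

/-- Leave-one-out representation of full-calibrated conformal p-values: with calibration
scores `c`, test score functions `T`, and untied score `s* = S_{Y_{n+i}}(X_{n+i})`, the
p-values `p̄_j^{(y)}` of the other test points equal `Ψ(p̄_i^{(Y_{n+i})}, W_i)`
coordinate-wise, and `u ↦ Ψ(u, W_i)` is coordinate-wise nondecreasing on `(0,1]`. -/
theorem stmt_15 {Y : Type*} (n m : ℕ) (c : Fin n → ℝ) (T : Fin m → Y → ℝ) (i : Fin m)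
    (sstar : ℝ) (hinj : Function.Injective c) (hnot : sstar ∉ Set.range c) :
    (∀ j : Fin m, j ≠ i → ∀ y : Y,
        (1 + ((Finset.univ.filter fun k => T j y ≤ c k).card : ℝ)) / (n + 1)
          = psiMap n ((Finset.univ.image c) ∪ {sstar}) (T j y)
              ((1 + ((Finset.univ.filter fun k => sstar ≤ c k).card : ℝ)) / (n + 1)))
    ∧ (∀ tsc : ℝ,
        MonotoneOn (fun u => psiMap n ((Finset.univ.image c) ∪ {sstar}) tsc u)
          (Set.Ioc (0 : ℝ) 1)) := by
  set A := univ.image c ∪ {sstar}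
  have hcount := card_filter_image_union_singleton hinj hnot
  have hcardA : #A = n + 1 := by simpa [A] using hcount fun _ => True
  have hrank : #{b ∈ A | sstar < b} = #{k | sstar ≤ c k} := by
    rw [hcount, if_neg (lt_irrefl _), add_zero]
    exact congrArg card (filter_congr fun k _ => (Ne.le_iff_lt fun h => hnot ⟨k, h.symm⟩).symm)
  refine ⟨fun j _ y => ?_, psiMap_monotoneOn n hcardA⟩
  have hpsi := psiMap_of_rank n A (mem_union_right _ (mem_singleton_self sstar)) (T j y)
  rw [hrank] at hpsi
  rw [show (1 : ℝ) + #{k | sstar ≤ c k} = (#{k | sstar ≤ c k} + 1 : ℕ) by push_cast; ring, hpsi,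
    hcount]
  rcases lt_or_ge sstar (T j y) with h | h
  · rw [if_pos h, if_neg h.not_ge]; push_cast; ring
  · rw [if_neg h.not_gt, if_pos h]; push_cast; ring

end
end

section
/- In the regression setting with locally weighted score S_y(x) = |y − μ(x)|/σ(x) (σ(x) > 0), for the informative collection I = {intervals I : |I| ≤ 2λ_0}, the adjusted p-value equals q_i = (1/(n+1))·(1 + Σ_{j=1}^n 1{S_{Y_j}(X_j) > λ_0/σ(X_{n+i})}), i.e., C^α_{n+i} := {y : p̄_i^(y) > α} is an interval of length ≤ 2λ_0 if and only if α ≥ q_i. -/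
/-!
The locally weighted score depends on `y` only through `|y - μ(x)|`, and the p-value is antitone
in the score, so the prediction set is a symmetric interval around `μ(x)`. Its half-length exceeds
`λ₀` exactly when it contains a point of score `t > λ₀/σ(x)`; as `t ↓ λ₀/σ(x)` the count
`#{j : t ≤ S_j}` eventually equals `#{j : λ₀/σ(x) < S_j}`, which is where `q` comes from.
-/

open Finset Filter Topology Set

namespace Conformal

section Interval

lemma ordConnected_setOf_lt_comp_abs_sub {f : ℝ → ℝ} (hf : Antitone f) (m α : ℝ) :
    OrdConnected {y | α < f |y - m|} := by
  refine ⟨fun y₁ hy₁ y₂ hy₂ y hy => ?_⟩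
  have hmax : |y - m| ≤ max |y₁ - m| |y₂ - m| :=
    abs_le_max_abs_abs (sub_le_sub_right hy.1 m) (sub_le_sub_right hy.2 m)
  calc α < min (f |y₁ - m|) (f |y₂ - m|) := lt_min hy₁ hy₂
    _ = f (max |y₁ - m| |y₂ - m|) := (hf.map_max ..).symm
    _ ≤ f |y - m| := hf hmax

lemma ediam_setOf_lt_comp_abs_sub_div_le_iff (f : ℝ → ℝ) {s lam : ℝ} (hs : 0 < s)
    (hlam : 0 ≤ lam) (m α : ℝ) :
    Metric.ediam {y | α < f (|y - m| / s)} ≤ ENNReal.ofReal (2 * lam) ↔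
      ∀ t, lam / s < t → f t ≤ α := by
  constructor
  · intro hdiam t ht
    by_contra! hft
    have hst : lam < s * t := by rwa [div_lt_iff₀' hs] at ht
    have hmem : ∀ y, |y - m| = s * t → y ∈ {y | α < f (|y - m| / s)} := fun y hy => by
      simpa [hy, hs.ne'] using hft
    have hedist : edist (m + s * t) (m - s * t) = ENNReal.ofReal (2 * (s * t)) := by
      rw [edist_dist, Real.dist_eq, abs_of_nonneg (by linarith)]
      ring_nf
    have hle := (Metric.edist_le_ediam_of_mem
      (hmem (m + s * t) (by rw [add_sub_cancel_left, abs_of_nonneg (by linarith)]))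
      (hmem (m - s * t) (by rw [sub_sub_cancel_left, abs_neg, abs_of_nonneg (by linarith)]))).trans
        hdiam
    rw [hedist, ENNReal.ofReal_le_ofReal_iff (by positivity)] at hle
    linarith
  · intro h
    have hsub : {y | α < f (|y - m| / s)} ⊆ Metric.closedBall m lam := by
      intro y hy
      rw [Metric.mem_closedBall, Real.dist_eq]
      by_contra! hfar
      exact (h _ (div_lt_div_of_pos_right hfar hs)).not_gt hy
    calc Metric.ediam _ ≤ Metric.ediam (Metric.closedBall m lam) := Metric.ediam_mono hsub
      _ = ENNReal.ofReal (2 * lam) := by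
        rw [Real.closedBall_eq_Icc, Real.ediam_Icc]; ring_nf

end Interval

section PValue

variable {ι : Type*} [Fintype ι] (S : ι → ℝ)

noncomputable def pValue (t : ℝ) : ℝ := (1 + #{j | t ≤ S j}) / (Fintype.card ι + 1)

lemma antitone_pValue : Antitone (pValue S) := by
  intro t t' htt'
  unfold pValue
  gcongr

lemma eventually_filter_le_eq_filter_lt (c : ℝ) :
    ∀ᶠ t in 𝓝[>] c, univ.filter (t ≤ S ·) = univ.filter (c < S ·) := by
  have hiff : ∀ j, ∀ᶠ t in 𝓝[>] c, (t ≤ S j ↔ c < S j) := by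
    intro j
    by_cases hc : c < S j
    · filter_upwards [nhdsWithin_le_nhds (eventually_lt_nhds hc)] with t ht
      exact iff_of_true ht.le hc
    · filter_upwards [self_mem_nhdsWithin] with t (ht : c < t)
      exact iff_of_false (by linarith) hc
  filter_upwards [eventually_all.2 hiff] with t ht
  ext j
  simp [ht j]

lemma forall_lt_pValue_le_iff (c α : ℝ) :
    (∀ t, c < t → pValue S t ≤ α) ↔ (1 + #{j | c < S j}) / (Fintype.card ι + 1) ≤ α := by
  constructor
  · intro h
    obtain ⟨t, ht, hct⟩ :=
      ((eventually_filter_le_eq_filter_lt S c).and self_mem_nhdsWithin).exists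
    have := h t hct
    rwa [pValue, ht] at this
  · intro h t hct
    refine le_trans ?_ h
    unfold pValue
    gcongr

end PValue

end Conformal

open Conformal in
theorem stmt_17_general {𝒳 : Type*} (n : ℕ) (μp σp : 𝒳 → ℝ) (hσ : ∀ x, 0 < σp x)
    (Xc : Fin n → 𝒳) (Yc : Fin n → ℝ) (x : 𝒳) (lam0 : ℝ) (hlam : 0 < lam0) :
    ∀ α : ℝ,
      Set.OrdConnected {y : ℝ | α <
          (1 + ((Finset.univ.filter fun j : Fin n =>
            |y - μp x| / σp x ≤ |Yc j - μp (Xc j)| / σp (Xc j)).card : ℝ)) / (n + 1)}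
      ∧ (EMetric.diam {y : ℝ | α <
            (1 + ((Finset.univ.filter fun j : Fin n =>
              |y - μp x| / σp x ≤ |Yc j - μp (Xc j)| / σp (Xc j)).card : ℝ)) / (n + 1)}
            ≤ ENNReal.ofReal (2 * lam0)
          ↔ (1 + ((Finset.univ.filter fun j : Fin n =>
              lam0 / σp x < |Yc j - μp (Xc j)| / σp (Xc j)).card : ℝ)) / (n + 1) ≤ α) := by
  intro α
  set S : Fin n → ℝ := fun j => |Yc j - μp (Xc j)| / σp (Xc j)
  have hpValue : ∀ t, (1 + (#{j | t ≤ |Yc j - μp (Xc j)| / σp (Xc j)} : ℝ)) / (n + 1) =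
      pValue S t := by
    simp [pValue, S]
  simp only [hpValue]
  refine ⟨ordConnected_setOf_lt_comp_abs_sub
    ((antitone_pValue S).comp_monotone (monotone_div_right_of_nonneg (hσ x).le)) _ _, ?_⟩
  have h := (ediam_setOf_lt_comp_abs_sub_div_le_iff _ (hσ x) hlam.le (μp x) α).trans
    (forall_lt_pValue_le_iff S _ α)
  rwa [Fintype.card_fin] at h

/-- Length-restricted prediction intervals in regression with the locally weighted score
`S_y(x) = |y − μ(x)|/σ(x)`: the prediction set `C^α = {y : p̄^(y) > α}` is an interval
(ord-connected set), and it has length (diameter) at most `2λ₀` if and only if `α ≥ q`,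
where `q = (1 + #{j : S_{Y_j}(X_j) > λ₀/σ(x)})/(n+1)` is the `I`-adjusted p-value. -/
theorem stmt_17 {𝒳 : Type*} (n : ℕ) (μp σp : 𝒳 → ℝ) (hσ : ∀ x, 0 < σp x)
    (Xc : Fin n → 𝒳) (Yc : Fin n → ℝ) (x : 𝒳) (lam0 : ℝ) (hlam : 0 < lam0)
    (hties : Function.Injective fun j : Fin n => |Yc j - μp (Xc j)| / σp (Xc j)) :
    ∀ α : ℝ,
      Set.OrdConnected {y : ℝ | α <
          (1 + ((Finset.univ.filter fun j : Fin n =>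
            |y - μp x| / σp x ≤ |Yc j - μp (Xc j)| / σp (Xc j)).card : ℝ)) / (n + 1)}
      ∧ (EMetric.diam {y : ℝ | α <
            (1 + ((Finset.univ.filter fun j : Fin n =>
              |y - μp x| / σp x ≤ |Yc j - μp (Xc j)| / σp (Xc j)).card : ℝ)) / (n + 1)}
            ≤ ENNReal.ofReal (2 * lam0)
          ↔ (1 + ((Finset.univ.filter fun j : Fin n =>
              lam0 / σp x < |Yc j - μp (Xc j)| / σp (Xc j)).card : ℝ)) / (n + 1) ≤ α) :=
  stmt_17_general n μp σp hσ Xc Yc x lam0 hlam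
end

section
/- Let U ∈ [0,1] and V ≥ 0 be random variables such that P(U ≤ u) ≤ u for all u ∈ [0,1], and for every r > 0 the map u ↦ P(V < r | U ≤ u) is nondecreasing in u. Then for any c > 0, E[ 1{U ≤ c·V} / V ] ≤ c (with the convention that the ratio is 0 when the indicator is 0). -/
/-!
Fix `λ > 1` and cut `{V > 0}` into the shells `λ^k ≤ V < λ^(k+1)`, `k ∈ ℤ`. On the `k`-th shell
the event `U ≤ c V` forces `U ≤ u_(k+1) := min (c λ^(k+1)) 1`, and there `1 / V ≤ λ^(-k)`.
Put `p_k := P(V < λ^k | U ≤ u_k)`. Positive dependence gives `P(V < λ^k | U ≤ u_(k+1)) ≥ p_k`,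
so the shell has probability at most `P(U ≤ u_(k+1)) (p_(k+1) - p_k) ≤ c λ^(k+1) (p_(k+1) - p_k)`
by super-uniformity. Summing over `k`, the expectation is at most `c λ ∑ (p_(k+1) - p_k) ≤ c λ`,
because `p` is nondecreasing with values in `[0, 1]`; then let `λ → 1`.
-/

open MeasureTheory ProbabilityTheory Set
open scoped ENNReal

theorem ENNReal.sum_Ico_tsub_of_monotone {f : ℤ → ℝ≥0∞} (hf : Monotone f) {m n : ℤ}
    (hmn : m ≤ n) :
    ∑ k ∈ Finset.Ico m n, (f (k + 1) - f k) = f n - f m := by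
  induction n, hmn using Int.leInduction with
  | base => simp
  | succ n hmn ih =>
    rw [← Finset.insert_Ico_right_eq_Ico_add_one hmn, Finset.sum_insert (by simp), ih,
      tsub_add_tsub_cancel (hf (by omega)) (hf hmn)]

theorem ENNReal.tsum_tsub_le_of_monotone {f : ℤ → ℝ≥0∞} (hf : Monotone f) {b : ℝ≥0∞}
    (hb : ∀ k, f k ≤ b) : ∑' k, (f (k + 1) - f k) ≤ b := by
  refine ENNReal.summable.tsum_le_of_sum_le fun F ↦ ?_
  obtain ⟨lo, hlo⟩ := F.bddBelow
  obtain ⟨hi, hhi⟩ := F.bddAbove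
  calc ∑ k ∈ F, (f (k + 1) - f k)
      ≤ ∑ k ∈ Finset.Ico lo (max lo (hi + 1)), (f (k + 1) - f k) :=
        Finset.sum_le_sum_of_subset fun k hk ↦
          Finset.mem_Ico.2 ⟨hlo hk, lt_max_of_lt_right (Int.lt_add_one_of_le (hhi hk))⟩
    _ = f (max lo (hi + 1)) - f lo := ENNReal.sum_Ico_tsub_of_monotone hf (le_max_left _ _)
    _ ≤ b := tsub_le_self.trans (hb _)

section

variable {Ω : Type*} [MeasurableSpace Ω] {μ : Measure Ω}

theorem integral_le_toReal_lintegral_ofReal (f : Ω → ℝ) :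
    ∫ ω, f ω ∂μ ≤ (∫⁻ ω, ENNReal.ofReal (f ω) ∂μ).toReal := by
  by_cases hf : Integrable f μ
  · rw [integral_eq_lintegral_pos_part_sub_lintegral_neg_part hf]
    exact sub_le_self _ ENNReal.toReal_nonneg
  · rw [integral_undef hf]
    exact ENNReal.toReal_nonneg

theorem lintegral_le_tsum_mul_measure {ι : Type*} [Countable ι] {f : Ω → ℝ≥0∞}
    {S : ι → Set Ω} (hS : ∀ i, MeasurableSet (S i)) {w : ι → ℝ≥0∞}
    (hf : ∀ ω, f ω ≤ ∑' i, (S i).indicator (fun _ ↦ w i) ω) :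
    ∫⁻ ω, f ω ∂μ ≤ ∑' i, w i * μ (S i) :=
  calc ∫⁻ ω, f ω ∂μ ≤ ∫⁻ ω, ∑' i, (S i).indicator (fun _ ↦ w i) ω ∂μ := lintegral_mono hf
    _ = ∑' i, w i * μ (S i) := by
      rw [lintegral_tsum fun i ↦ (measurable_const.indicator (hS i)).aemeasurable]
      simp only [lintegral_indicator_const (hS _)]

variable [IsFiniteMeasure μ] {A A' B B' : Set Ω}

theorem cond_le_cond_of_mul_le (hB : MeasurableSet B) (hB' : MeasurableSet B') (hBB' : B ⊆ B')
    (h : μ (A ∩ B) * μ B' ≤ μ (A ∩ B') * μ B) : μ[A | B] ≤ μ[A | B'] := by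
  rcases eq_or_ne (μ B) 0 with hB0 | hB0
  · simp [cond_eq_zero_of_meas_eq_zero hB0]
  have hB'0 : μ B' ≠ 0 := (measure_pos_of_superset hBB' hB0).ne'
  rw [← ENNReal.mul_le_mul_iff_left (mul_ne_zero hB0 hB'0)
    (ENNReal.mul_ne_top (measure_ne_top μ B) (measure_ne_top μ B'))]
  calc μ[A | B] * (μ B * μ B') = μ (A ∩ B) * μ B' := by
        rw [← mul_assoc, cond_mul_eq_inter hB, inter_comm]
    _ ≤ μ (A ∩ B') * μ B := h
    _ = μ[A | B'] * (μ B * μ B') := by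
        rw [mul_comm (μ B), ← mul_assoc, cond_mul_eq_inter hB', inter_comm]

theorem measure_sdiff_inter_le_mul_tsub_cond (hA : MeasurableSet A) (hB : MeasurableSet B)
    (hB' : MeasurableSet B') (hAA' : A ⊆ A') (hBB' : B ⊆ B')
    (h : μ (A ∩ B) * μ B' ≤ μ (A ∩ B') * μ B) :
    μ ((A' \ A) ∩ B') ≤ μ B' * (μ[A' | B'] - μ[A | B]) := by
  have hsub : A ∩ B' ⊆ A' ∩ B' := inter_subset_inter_left _ hAA'
  calc μ ((A' \ A) ∩ B') = μ (A' ∩ B') - μ (A ∩ B') := by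
        rw [inter_sdiff_distrib_right,
          measure_sdiff hsub (hA.inter hB').nullMeasurableSet (measure_ne_top μ _)]
    _ = μ[A' | B'] * μ B' - μ[A | B'] * μ B' := by
        rw [cond_mul_eq_inter hB', cond_mul_eq_inter hB', inter_comm B', inter_comm B']
    _ ≤ μ[A' | B'] * μ B' - μ[A | B] * μ B' :=
        tsub_le_tsub_left (mul_le_mul_left (cond_le_cond_of_mul_le hB hB' hBB' h) _) _
    _ = μ B' * (μ[A' | B'] - μ[A | B]) := by
        rw [mul_comm, ENNReal.mul_sub fun _ _ ↦ measure_ne_top μ B']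
        simp only [mul_comm]

theorem tsum_mul_measure_sdiff_inter_le {A B : ℤ → Set Ω} (hA : ∀ k, MeasurableSet (A k))
    (hB : ∀ k, MeasurableSet (B k)) (hA_mono : Monotone A) (hB_mono : Monotone B)
    (hcross : ∀ k, μ (A k ∩ B k) * μ (B (k + 1)) ≤ μ (A k ∩ B (k + 1)) * μ (B k))
    {w : ℤ → ℝ≥0∞} {C : ℝ≥0∞} (hw : ∀ k, w k * μ (B (k + 1)) ≤ C) :
    ∑' k, w k * μ ((A (k + 1) \ A k) ∩ B (k + 1)) ≤ C := by
  set p : ℤ → ℝ≥0∞ := fun k ↦ μ[A k | B k]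
  have hsucc : ∀ k : ℤ, k ≤ k + 1 := fun k ↦ Int.le_add_one le_rfl
  have hp : Monotone p := monotone_int_of_le_succ fun k ↦
    (cond_le_cond_of_mul_le (hB k) (hB (k + 1)) (hB_mono (hsucc k)) (hcross k)).trans
      (measure_mono (hA_mono (hsucc k)))
  calc ∑' k, w k * μ ((A (k + 1) \ A k) ∩ B (k + 1))
      ≤ ∑' k, C * (p (k + 1) - p k) := ENNReal.tsum_le_tsum fun k ↦ by
        grw [measure_sdiff_inter_le_mul_tsub_cond (hA k) (hB k) (hB (k + 1)) (hA_mono (hsucc k))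
          (hB_mono (hsucc k)) (hcross k), ← mul_assoc, hw k]
    _ = C * ∑' k, (p (k + 1) - p k) := ENNReal.tsum_mul_left
    _ ≤ C * 1 := by grw [ENNReal.tsum_tsub_le_of_monotone hp fun k ↦ prob_le_one]
    _ = C := mul_one C

end

theorem ofReal_ite_one_div_le_tsum_indicator {Ω : Type*} {U V : Ω → ℝ} {c lam : ℝ}
    (hU1 : ∀ ω, U ω ≤ 1) (hc : 0 ≤ c) (hlam : 1 < lam) (ω : Ω) :
    ENNReal.ofReal (if U ω ≤ c * V ω then 1 / V ω else 0)
      ≤ ∑' k : ℤ, (({ω | V ω < lam ^ (k + 1)} \ {ω | V ω < lam ^ k})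
          ∩ {ω | U ω ≤ min (c * lam ^ (k + 1)) 1}).indicator
            (fun _ ↦ ENNReal.ofReal (lam ^ k)⁻¹) ω := by
  by_cases h : U ω ≤ c * V ω ∧ 0 < V ω
  · obtain ⟨k, hk_le, hk_lt⟩ := exists_mem_Ico_zpow h.2 hlam
    have hmem : ω ∈ ({ω | V ω < lam ^ (k + 1)} \ {ω | V ω < lam ^ k})
        ∩ {ω | U ω ≤ min (c * lam ^ (k + 1)) 1} :=
      ⟨⟨hk_lt, not_lt.2 hk_le⟩, le_min (h.1.trans (by gcongr)) (hU1 ω)⟩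
    refine le_trans ?_ (ENNReal.le_tsum k)
    rw [if_pos h.1, indicator_of_mem hmem, one_div]
    exact ENNReal.ofReal_le_ofReal (inv_anti₀ (zpow_pos (zero_lt_one.trans hlam) k) hk_le)
  · refine (ENNReal.ofReal_eq_zero.2 ?_).trans_le zero_le
    split_ifs with hUV
    · exact one_div_nonpos.2 (not_lt.1 fun hV ↦ h ⟨hUV, hV⟩)
    · rfl

theorem lintegral_ofReal_ite_one_div_le {Ω : Type*} [MeasurableSpace Ω] {μ : Measure Ω}
    [IsFiniteMeasure μ] {U V : Ω → ℝ} {c lam : ℝ} (hU : Measurable U) (hV : Measurable V)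
    (hU1 : ∀ ω, U ω ≤ 1)
    (hsup : ∀ u ∈ Icc (0 : ℝ) 1, μ {ω | U ω ≤ u} ≤ ENNReal.ofReal u)
    (hmono : ∀ r : ℝ, 0 < r → ∀ u u', u ∈ Icc (0 : ℝ) 1 → u' ∈ Icc (0 : ℝ) 1 → u ≤ u' →
      μ ({ω | V ω < r} ∩ {ω | U ω ≤ u}) * μ {ω | U ω ≤ u'}
        ≤ μ ({ω | V ω < r} ∩ {ω | U ω ≤ u'}) * μ {ω | U ω ≤ u})
    (hc : 0 < c) (hlam : 1 < lam) :
    ∫⁻ ω, ENNReal.ofReal (if U ω ≤ c * V ω then 1 / V ω else 0) ∂μ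
      ≤ ENNReal.ofReal (c * lam) := by
  have hlam0 : 0 < lam := zero_lt_one.trans hlam
  set u : ℤ → ℝ := fun k ↦ min (c * lam ^ k) 1
  have hu : ∀ k, u k ∈ Icc (0 : ℝ) 1 := fun k ↦ ⟨by positivity, min_le_right _ _⟩
  have hu_mono : Monotone u := fun i j hij ↦
    min_le_min_right _ (mul_le_mul_of_nonneg_left (zpow_le_zpow_right₀ hlam.le hij) hc.le)
  set A : ℤ → Set Ω := fun k ↦ {ω | V ω < lam ^ k}
  set B : ℤ → Set Ω := fun k ↦ {ω | U ω ≤ u k}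
  have hA : ∀ k, MeasurableSet (A k) := fun k ↦ measurableSet_lt hV measurable_const
  have hB : ∀ k, MeasurableSet (B k) := fun k ↦ measurableSet_le hU measurable_const
  have hweight (k : ℤ) : ENNReal.ofReal (lam ^ k)⁻¹ * μ (B (k + 1)) ≤ ENNReal.ofReal (c * lam) :=
    calc ENNReal.ofReal (lam ^ k)⁻¹ * μ (B (k + 1))
        ≤ ENNReal.ofReal (lam ^ k)⁻¹ * ENNReal.ofReal (c * lam ^ (k + 1)) := by
          grw [hsup _ (hu (k + 1))]
          gcongr
          exact min_le_left _ _
      _ = ENNReal.ofReal (c * lam) := by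
          rw [← ENNReal.ofReal_mul (by positivity), zpow_add_one₀ hlam0.ne']
          field_simp
  refine (lintegral_le_tsum_mul_measure (fun k ↦ ((hA (k + 1)).diff (hA k)).inter (hB (k + 1)))
    (ofReal_ite_one_div_le_tsum_indicator hU1 hc.le hlam)).trans
    (tsum_mul_measure_sdiff_inter_le hA hB
      (fun i j hij ω hω ↦ hω.out.trans_le (zpow_le_zpow_right₀ hlam.le hij))
      (fun i j hij ω hω ↦ hω.out.trans (hu_mono hij))
      (fun k ↦ hmono _ (zpow_pos hlam0 k) _ _ (hu k) (hu (k + 1)) (hu_mono (by omega)))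
      hweight)

theorem stmt_19_general {Ω : Type*} [MeasurableSpace Ω] (μ : Measure Ω) [IsProbabilityMeasure μ]
    (U V : Ω → ℝ) (hUmeas : Measurable U) (hVmeas : Measurable V)
    (hU01 : ∀ ω, U ω ∈ Set.Icc (0 : ℝ) 1)
    (hsup : ∀ u ∈ Set.Icc (0 : ℝ) 1, μ {ω | U ω ≤ u} ≤ ENNReal.ofReal u)
    (hmono : ∀ r : ℝ, 0 < r → ∀ u u', u ∈ Set.Icc (0 : ℝ) 1 → u' ∈ Set.Icc (0 : ℝ) 1 →
      u ≤ u' →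
      μ ({ω | V ω < r} ∩ {ω | U ω ≤ u}) * μ {ω | U ω ≤ u'}
        ≤ μ ({ω | V ω < r} ∩ {ω | U ω ≤ u'}) * μ {ω | U ω ≤ u})
    (c : ℝ) (hc : 0 < c) :
    ∫ ω, (if U ω ≤ c * V ω then 1 / V ω else 0) ∂μ ≤ c := by
  refine le_of_forall_gt_imp_ge_of_dense fun a ha ↦ ?_
  have hlam : 1 < a / c := (one_lt_div hc).2 ha
  calc ∫ ω, (if U ω ≤ c * V ω then 1 / V ω else 0) ∂μ
      ≤ (∫⁻ ω, ENNReal.ofReal (if U ω ≤ c * V ω then 1 / V ω else 0) ∂μ).toReal :=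
        integral_le_toReal_lintegral_ofReal _
    _ ≤ c * (a / c) := ENNReal.toReal_le_of_le_ofReal (by positivity)
        (lintegral_ofReal_ite_one_div_le hUmeas hVmeas (fun ω ↦ (hU01 ω).2) hsup hmono hc hlam)
    _ = a := mul_div_cancel₀ a hc.ne'

/-- Lemma 3.2 (ii) of Blanchard–Roquain (PRDS-type lemma): if `U ∈ [0,1]` is
super-uniform, `V ≥ 0`, and for every `r > 0` the map `u ↦ P(V < r | U ≤ u)` is
nondecreasing (stated in cross-multiplied form), then for any `c > 0`,
`E[ 1{U ≤ c·V} / V ] ≤ c`. -/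
theorem stmt_19 {Ω : Type*} [MeasurableSpace Ω] (μ : Measure Ω) [IsProbabilityMeasure μ]
    (U V : Ω → ℝ) (hUmeas : Measurable U) (hVmeas : Measurable V)
    (hU01 : ∀ ω, U ω ∈ Set.Icc (0 : ℝ) 1) (hV0 : ∀ ω, 0 ≤ V ω)
    (hsup : ∀ u ∈ Set.Icc (0 : ℝ) 1, μ {ω | U ω ≤ u} ≤ ENNReal.ofReal u)
    (hmono : ∀ r : ℝ, 0 < r → ∀ u u', u ∈ Set.Icc (0 : ℝ) 1 → u' ∈ Set.Icc (0 : ℝ) 1 →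
      u ≤ u' →
      μ ({ω | V ω < r} ∩ {ω | U ω ≤ u}) * μ {ω | U ω ≤ u'}
        ≤ μ ({ω | V ω < r} ∩ {ω | U ω ≤ u'}) * μ {ω | U ω ≤ u})
    (c : ℝ) (hc : 0 < c) :
    ∫ ω, (if U ω ≤ c * V ω then 1 / V ω else 0) ∂μ ≤ c :=
  stmt_19_general μ U V hUmeas hVmeas hU01 hsup hmono c hc
end
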